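/- arXiv:math/0402422 — 3 statements merged into one kernel-verified Lean document; each statement's English description precedes it below -/
import Mathlib

section
/- Let F be an algebraically closed field of characteristic zero, Γ an additive abelian group, ε a skew-symmetric bicharacter of Γ, and A a Γ-graded associative unital ε-commutative F-algebra. Let D be a finite-dimensional Γ-graded F-subspace of color derivations of A such that every homogeneous element of D is a homogeneous color derivation, D is ε-commutative (∂∘∂' = ε(∂̄,∂̄')·∂'∘∂ for all homogeneous ∂,∂' ∈ D), every element of D is locally finite on A, and every eigenspace of every homogeneous element of D is a Γ-graded subspace of A. If every nonzero homogeneous element u ∈ A satisfying ∂(u) ∈ F·u for all homogeneous ∂ ∈ D is a unit of A, then A is graded D-simple. -/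
/-!
Let `I ≠ 0` be a graded `D`-stable ideal and `v ∈ I` nonzero homogeneous. Closing `F v`
successively under finitely many homogeneous derivations spanning `D` gives a
finite-dimensional graded `D`-stable subspace `W ⊆ I`: local finiteness keeps it
finite-dimensional and ε-commutativity preserves the stabilities already obtained.
On `W` the homogeneous elements of `D` have a common homogeneous eigenvector: a homogeneous
eigenvector of a derivation of nonzero degree has eigenvalue `0`, so by ε-commutativity every
eigenspace met this way is `D`-stable, and `W` can be cut down by dimension. That eigenvector
lies in `I` and is a unit, hence `I = A`.
-/

/-- `d` is a homogeneous color derivation of degree `lam` of the `Γ`-graded algebra `A`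
(with grading `𝒜`) relative to the bicharacter `ε`. -/
def IsHomColorDer {F : Type*} [Field F] {Γ : Type*} [AddCommGroup Γ]
    {A : Type*} [Ring A] [Algebra F A]
    (ε : Γ → Γ → F) (𝒜 : Γ → Submodule F A) (lam : Γ) (d : Module.End F A) : Prop :=
  (∀ μ : Γ, ∀ a ∈ 𝒜 μ, d a ∈ 𝒜 (lam + μ)) ∧
  (∀ (l m : Γ) (a b : A), a ∈ 𝒜 l → b ∈ 𝒜 m →
    d (a * b) = d a * b + ε lam l • (a * d b))

/-- `A` is graded `D`-simple: the only `Γ`-graded two-sided ideals of `A` stable under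
all derivations in `D` are `0` and `A`. -/
def IsGradedDSimple {F : Type*} [Field F] {Γ : Type*} [AddCommGroup Γ] [DecidableEq Γ]
    {A : Type*} [Ring A] [Algebra F A]
    (𝒜 : Γ → Submodule F A) [GradedAlgebra 𝒜] (D : Set (Module.End F A)) : Prop :=
  ∀ I : Submodule F A,
    (∀ (a x : A), x ∈ I → a * x ∈ I ∧ x * a ∈ I) →
    (∀ x ∈ I, ∀ γ : Γ, (DirectSum.decompose 𝒜 x γ : A) ∈ I) →
    (∀ d ∈ D, ∀ x ∈ I, d x ∈ I) →
    I = ⊥ ∨ I = ⊤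

open SetLike DirectSum

section Homogeneous

variable {R M ι : Type*} [Semiring R] [AddCommMonoid M] [Module R M] [DecidableEq ι]
  (ℳ : ι → Submodule R M) [Decomposition ℳ]

theorem Submodule.isHomogeneous_span {s : Set M} (hs : ∀ x ∈ s, IsHomogeneousElem ℳ x) :
    (Submodule.span R s).IsHomogeneous ℳ := by
  intro i x hx
  induction hx using Submodule.span_induction with
  | mem x hx =>
    obtain ⟨j, hj⟩ := hs x hx
    rcases eq_or_ne j i with rfl | hji
    · rw [decompose_of_mem_same ℳ hj]
      exact Submodule.subset_span hx
    · rw [decompose_of_mem_ne ℳ hj hji]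
      exact Submodule.zero_mem _
  | zero => simp
  | add x y _ _ hx hy =>
    rw [decompose_add, DirectSum.add_apply, Submodule.coe_add]
    exact Submodule.add_mem _ hx hy
  | smul a x _ hx =>
    rw [decompose_smul, DFinsupp.smul_apply, Submodule.coe_smul]
    exact Submodule.smul_mem _ _ hx

theorem Submodule.IsHomogeneous.eq_span {p : Submodule R M} (hp : p.IsHomogeneous ℳ) :
    p = Submodule.span R {x | x ∈ p ∧ IsHomogeneousElem ℳ x} := by
  classical
  refine le_antisymm (fun x hx => ?_) (Submodule.span_le.mpr fun x hx => hx.1)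
  rw [← sum_support_decompose ℳ x]
  exact Submodule.sum_mem _ fun i _ =>
    Submodule.subset_span ⟨hp i hx, isHomogeneousElem_coe _⟩

theorem Submodule.IsHomogeneous.inf {p q : Submodule R M} (hp : p.IsHomogeneous ℳ)
    (hq : q.IsHomogeneous ℳ) : (p ⊓ q).IsHomogeneous ℳ :=
  fun i _ hx => ⟨hp i hx.1, hq i hx.2⟩

theorem Submodule.IsHomogeneous.exists_isHomogeneousElem_ne_zero {p : Submodule R M}
    (hp : p.IsHomogeneous ℳ) (hp₀ : p ≠ ⊥) : ∃ x ∈ p, x ≠ 0 ∧ IsHomogeneousElem ℳ x := by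
  obtain ⟨x, hx, hx₀⟩ := (Submodule.ne_bot_iff p).mp hp₀
  by_contra! h
  have hcomp (i : ι) : (decompose ℳ x i : M) = 0 :=
    by_contra fun hi => h _ (hp i hx) hi (isHomogeneousElem_coe _)
  exact hx₀ <| (decompose ℳ).injective <| by ext i; simp [hcomp]

end Homogeneous

theorem mul_pow_eq_smul_pow_mul {R S : Type*} [CommSemiring R] [Semiring S] [Algebra R S]
    {a b : S} {c : R} (h : a * b = c • (b * a)) (n : ℕ) : a * b ^ n = c ^ n • (b ^ n * a) := by
  induction n with
  | zero => simp
  | succ n ih =>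
    rw [pow_succ, ← mul_assoc, ih, smul_mul_assoc, mul_assoc, h, mul_smul_comm, smul_smul,
      ← mul_assoc, ← pow_succ, pow_succ]

namespace Module.End

variable {R M : Type*} [Semiring R] [AddCommMonoid M] [Module R M]

def invtClosure (f : Module.End R M) (p : Submodule R M) : Submodule R M :=
  ⨆ n : ℕ, p.map (f ^ n)

variable {f : Module.End R M} {p q : Submodule R M}

theorem pow_apply_mem_invtClosure {x : M} (hx : x ∈ p) (n : ℕ) : (f ^ n) x ∈ f.invtClosure p :=
  Submodule.mem_iSup_of_mem n (Submodule.mem_map_of_mem hx)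

theorem le_invtClosure : p ≤ f.invtClosure p := fun x hx => by
  simpa using pow_apply_mem_invtClosure (f := f) hx 0

theorem map_invtClosure_le {g : Module.End R M}
    (hg : ∀ x ∈ p, ∀ n : ℕ, g ((f ^ n) x) ∈ f.invtClosure p) :
    (f.invtClosure p).map g ≤ f.invtClosure p := by
  rw [invtClosure, Submodule.map_iSup]
  refine iSup_le fun n => ?_
  rintro _ ⟨_, ⟨x, hx, rfl⟩, rfl⟩
  exact hg x hx n

theorem invtClosure_mem_invtSubmodule : f.invtClosure p ∈ f.invtSubmodule :=
  (mem_invtSubmodule_iff_map_le f).mpr <| map_invtClosure_le fun x hx n => by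
    simpa [← Module.End.mul_apply, ← pow_succ'] using pow_apply_mem_invtClosure hx (n + 1)

theorem invtClosure_le (hpq : p ≤ q) (hq : q ∈ f.invtSubmodule) : f.invtClosure p ≤ q :=
  iSup_le fun n => Submodule.map_le_iff_le_comap.mpr fun x hx => by
    induction n with
    | zero => simpa using hpq hx
    | succ n ih => simpa [pow_succ'] using hq ih

section CommSemiring

variable {R M : Type*} [CommSemiring R] [AddCommMonoid M] [Module R M]
  {f g : Module.End R M} {p : Submodule R M}

theorem invtClosure_mem_invtSubmodule_of_mul_eq_smul {c : R} (hgf : g * f = c • (f * g))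
    (hp : p ∈ g.invtSubmodule) : f.invtClosure p ∈ g.invtSubmodule :=
  (mem_invtSubmodule_iff_map_le g).mpr <| map_invtClosure_le fun x hx n => by
    rw [← Module.End.mul_apply, mul_pow_eq_smul_pow_mul hgf n, LinearMap.smul_apply,
      Module.End.mul_apply]
    exact Submodule.smul_mem _ _ (pow_apply_mem_invtClosure (f := f) (p := p) (hp hx) n)

theorem mem_invtSubmodule_of_mem_span {s : Set (Module.End R M)}
    (hs : ∀ g ∈ s, p ∈ g.invtSubmodule) (hf : f ∈ Submodule.span R s) : p ∈ f.invtSubmodule := by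
  induction hf using Submodule.span_induction with
  | mem g hg => exact hs g hg
  | zero => simp
  | add g h _ _ hg hh => exact invtSubmodule_inf_invtSubmodule_le_invtSubmodule_add g h ⟨hg, hh⟩
  | smul c g _ hg => exact invtSubmodule_le_invtSubmodule_smul g c hg

end CommSemiring

theorem finiteDimensional_invtClosure {K V : Type*} [Field K] [AddCommGroup V] [Module K V]
    {f : Module.End K V}
    (hf : ∀ v : V, FiniteDimensional K (Submodule.span K (Set.range fun n : ℕ => (f ^ n) v)))
    (p : Submodule K V) [FiniteDimensional K p] : FiniteDimensional K (f.invtClosure p) := by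
  obtain ⟨s, rfl⟩ := (Submodule.fg_iff_finiteDimensional p).mpr ‹_›
  refine Submodule.finiteDimensional_of_le
    (S₂ := ⨆ v : s, Submodule.span K (Set.range fun n : ℕ => (f ^ n) v)) (iSup_le fun n => ?_)
  rw [Submodule.map_span, Submodule.span_le]
  rintro _ ⟨v, hv, rfl⟩
  exact Submodule.mem_iSup_of_mem ⟨v, hv⟩ (Submodule.subset_span ⟨n, rfl⟩)

section Graded

variable {R M ι : Type*} [Semiring R] [AddCommMonoid M] [Module R M] [DecidableEq ι]
  (ℳ : ι → Submodule R M) [Decomposition ℳ]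

theorem isHomogeneous_invtClosure {f : Module.End R M}
    (hf : ∀ x, IsHomogeneousElem ℳ x → IsHomogeneousElem ℳ (f x)) {p : Submodule R M}
    (hp : p.IsHomogeneous ℳ) : (f.invtClosure p).IsHomogeneous ℳ := by
  have hpow (n : ℕ) (x : M) (hx : IsHomogeneousElem ℳ x) : IsHomogeneousElem ℳ ((f ^ n) x) := by
    induction n with
    | zero => simpa using hx
    | succ n ih => simpa [pow_succ'] using hf _ ih
  rw [invtClosure, hp.eq_span ℳ]
  simp_rw [Submodule.map_span, ← Submodule.span_iUnion]
  refine Submodule.isHomogeneous_span ℳ ?_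
  simp only [Set.mem_iUnion, Set.mem_image]
  rintro _ ⟨n, x, ⟨-, hx⟩, rfl⟩
  exact hpow n x hx

end Graded

theorem exists_inf_eigenspace_ne_bot {K V : Type*} [Field K] [IsAlgClosed K]
    [AddCommGroup V] [Module K V] {f : Module.End K V} {W : Submodule K V}
    [FiniteDimensional K W] (hW : W ≠ ⊥) (hfW : W ∈ f.invtSubmodule) :
    ∃ c : K, W ⊓ f.eigenspace c ≠ ⊥ := by
  have : Nontrivial W := Submodule.nontrivial_iff_ne_bot.mpr hW
  obtain ⟨c, hc⟩ := exists_eigenvalue (f.restrict hfW)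
  obtain ⟨v, hv⟩ := hc.exists_hasEigenvector
  have hfv : f v = c • (v : V) := congrArg Subtype.val hv.apply_eq_smul
  exact ⟨c, (Submodule.ne_bot_iff _).mpr
    ⟨v, ⟨v.2, mem_eigenspace_iff.mpr hfv⟩, fun h => hv.2 (Subtype.ext h)⟩⟩

theorem eigenspace_mem_invtSubmodule_of_mul_eq_smul {R M : Type*} [CommRing R]
    [AddCommGroup M] [Module R M] {f g : Module.End R M} {e c : R}
    (hfg : f * g = e • (g * f)) (hc : e * c = c) : f.eigenspace c ∈ g.invtSubmodule := by
  rw [mem_invtSubmodule_iff_forall_mem_of_mem]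
  intro x hx
  rw [mem_eigenspace_iff] at hx ⊢
  rw [← mul_apply, hfg, LinearMap.smul_apply, mul_apply, hx, map_smul,
    smul_smul, hc]

section Degree

variable {K V Γ : Type*} [Field K] [AddCommGroup V] [Module K V]
  [AddCancelCommMonoid Γ] (𝒱 : Γ → Submodule K V)

def HasDegree (f : Module.End K V) (γ : Γ) : Prop :=
  ∀ μ, Set.MapsTo f (𝒱 μ) (𝒱 (γ + μ))

variable {𝒱}

theorem HasDegree.isHomogeneousElem_apply {f : Module.End K V} {γ : Γ}
    (hf : f.HasDegree 𝒱 γ) {x : V} (hx : IsHomogeneousElem 𝒱 x) : IsHomogeneousElem 𝒱 (f x) :=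
  let ⟨μ, hμ⟩ := hx; ⟨γ + μ, hf μ hμ⟩

variable [DecidableEq Γ] [Decomposition 𝒱]

theorem HasDegree.eigenvalue_eq_zero {f : Module.End K V} {γ μ : Γ}
    (hf : f.HasDegree 𝒱 γ) (hγ : γ ≠ 0) {x : V} (hx : x ∈ 𝒱 μ) (hx₀ : x ≠ 0) {c : K}
    (hfx : f x = c • x) : c = 0 := by
  by_contra hc
  have hx' : x ∈ 𝒱 (γ + μ) := by
    rw [← inv_smul_smul₀ hc x, ← hfx]
    exact Submodule.smul_mem _ _ (hf μ hx)
  have hne : γ + μ ≠ μ := fun h => hγ (by rwa [add_eq_right] at h)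
  exact hx₀ (by rw [← decompose_of_mem_same 𝒱 hx, decompose_of_mem_ne 𝒱 hx' hne])

end Degree

end Module.End

section FiniteInvariant

variable {K V ι : Type*} [Field K] [AddCommGroup V] [Module K V] [DecidableEq ι]
  (ℳ : ι → Submodule K V) [Decomposition ℳ]

theorem exists_finiteDimensional_isHomogeneous_invtSubmodule_between
    (s : Finset (Module.End K V))
    (hfin : ∀ f ∈ s, ∀ v : V,
      FiniteDimensional K (Submodule.span K (Set.range fun n : ℕ => (f ^ n) v)))
    (hhom : ∀ f ∈ s, ∀ x, IsHomogeneousElem ℳ x → IsHomogeneousElem ℳ (f x))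
    (hcomm : ∀ f ∈ s, ∀ g ∈ s, ∃ c : K, g * f = c • (f * g))
    {p q : Submodule K V} [FiniteDimensional K p] (hp : p.IsHomogeneous ℳ) (hpq : p ≤ q)
    (hq : ∀ f ∈ s, q ∈ f.invtSubmodule) :
    ∃ W : Submodule K V, FiniteDimensional K W ∧ W.IsHomogeneous ℳ ∧ p ≤ W ∧ W ≤ q ∧
      ∀ f ∈ s, W ∈ f.invtSubmodule := by
  classical
  induction s using Finset.induction_on with
  | empty => exact ⟨p, ‹_›, hp, le_rfl, hpq, by simp⟩
  | insert f s _ ih =>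
    simp only [Finset.mem_insert, forall_eq_or_imp] at hfin hhom hcomm hq
    obtain ⟨W, hWfin, hWh, hpW, hWq, hWs⟩ :=
      ih hfin.2 hhom.2 (fun g hg h hh => hcomm.2 g hg |>.2 h hh) hq.2
    refine ⟨f.invtClosure W, Module.End.finiteDimensional_invtClosure hfin.1 W,
      Module.End.isHomogeneous_invtClosure ℳ hhom.1 hWh, hpW.trans Module.End.le_invtClosure,
      Module.End.invtClosure_le hWq hq.1, ?_⟩
    simp only [Finset.mem_insert, forall_eq_or_imp]
    refine ⟨Module.End.invtClosure_mem_invtSubmodule, fun g hg => ?_⟩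
    obtain ⟨c, hc⟩ := hcomm.1.2 g hg
    exact Module.End.invtClosure_mem_invtSubmodule_of_mul_eq_smul hc (hWs g hg)

end FiniteInvariant

section CommonEigenvector

variable {K V Γ : Type*} [Field K] [IsAlgClosed K] [AddCommGroup V] [Module K V]
  [AddCancelCommMonoid Γ] [DecidableEq Γ] {𝒱 : Γ → Submodule K V} [Decomposition 𝒱]
  (ε : Γ → Γ → K) (T : Set (Γ × Module.End K V))

theorem exists_eigenspace_ne_bot_mem_invtSubmodule (hε : ∀ γ, ε 0 γ = 1)
    (hdeg : ∀ d ∈ T, d.2.HasDegree 𝒱 d.1)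
    (hcomm : ∀ d ∈ T, ∀ d' ∈ T, d.2 * d'.2 = ε d.1 d'.1 • (d'.2 * d.2))
    (heig : ∀ d ∈ T, ∀ c, (d.2.eigenspace c).IsHomogeneous 𝒱)
    {W : Submodule K V} [FiniteDimensional K W] (hW : W ≠ ⊥) (hWh : W.IsHomogeneous 𝒱)
    {d : Γ × Module.End K V} (hd : d ∈ T) (hWd : W ∈ d.2.invtSubmodule) :
    ∃ c : K, W ⊓ d.2.eigenspace c ≠ ⊥ ∧ ∀ d' ∈ T, d.2.eigenspace c ∈ d'.2.invtSubmodule := by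
  obtain ⟨c, hc⟩ := Module.End.exists_inf_eigenspace_ne_bot hW hWd
  obtain ⟨x, hx, hx₀, μ, hμ⟩ :=
    (hWh.inf 𝒱 (heig d hd c)).exists_isHomogeneousElem_ne_zero 𝒱 hc
  -- A nonzero degree forces the eigenvalue `0`, on which the twisting factors act trivially.
  have hεc (γ : Γ) : ε d.1 γ * c = c := by
    by_cases hγ : d.1 = 0
    · rw [hγ, hε, one_mul]
    · rw [(hdeg d hd).eigenvalue_eq_zero hγ hμ hx₀ (Module.End.mem_eigenspace_iff.mp hx.2),
        mul_zero]
  exact ⟨c, hc, fun d' hd' =>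
    Module.End.eigenspace_mem_invtSubmodule_of_mul_eq_smul (hcomm d hd d' hd') (hεc d'.1)⟩

theorem exists_isHomogeneousElem_common_eigenvector (hε : ∀ γ, ε 0 γ = 1)
    (hdeg : ∀ d ∈ T, d.2.HasDegree 𝒱 d.1)
    (hcomm : ∀ d ∈ T, ∀ d' ∈ T, d.2 * d'.2 = ε d.1 d'.1 • (d'.2 * d.2))
    (heig : ∀ d ∈ T, ∀ c, (d.2.eigenspace c).IsHomogeneous 𝒱)
    (W : Submodule K V) [FiniteDimensional K W] (hW : W ≠ ⊥) (hWh : W.IsHomogeneous 𝒱)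
    (hWT : ∀ d ∈ T, W ∈ d.2.invtSubmodule) :
    ∃ x ∈ W, x ≠ 0 ∧ IsHomogeneousElem 𝒱 x ∧ ∀ d ∈ T, ∃ c : K, d.2 x = c • x := by
  induction hn : Module.finrank K W using Nat.strong_induction_on generalizing W with
  | _ n ih =>
  by_cases hscalar : ∀ d ∈ T, ∃ c : K, W ≤ d.2.eigenspace c
  · obtain ⟨x, hx, hx₀, hxh⟩ := hWh.exists_isHomogeneousElem_ne_zero 𝒱 hW
    exact ⟨x, hx, hx₀, hxh, fun d hd =>
      (hscalar d hd).imp fun c hc => Module.End.mem_eigenspace_iff.mp (hc hx)⟩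
  push Not at hscalar
  obtain ⟨d, hd, hdW⟩ := hscalar
  obtain ⟨c, hE, hEinv⟩ :=
    exists_eigenspace_ne_bot_mem_invtSubmodule ε T hε hdeg hcomm heig hW hWh hd (hWT d hd)
  have hlt : W ⊓ d.2.eigenspace c < W := inf_lt_left.mpr (hdW c)
  obtain ⟨x, hx, hxrest⟩ := ih _ (hn ▸ Submodule.finrank_lt_finrank_of_lt hlt) _ hE
    (hWh.inf 𝒱 (heig d hd c))
    (fun d' hd' => Module.End.invtSubmodule.inf_mem (hWT d' hd') (hEinv d' hd')) rfl
  exact ⟨x, hx.1, hxrest⟩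

end CommonEigenvector

theorem bicharacter_zero_left {Γ K : Type*} [AddMonoid Γ] [CommGroupWithZero K] {ε : Γ → Γ → K}
    (hskew : ∀ l m : Γ, ε l m * ε m l = 1) (hmul : ∀ l m n : Γ, ε l (m + n) = ε l m * ε l n)
    (m : Γ) : ε 0 m = 1 := by
  have hε0 : ε m 0 = 1 := by
    have hne : ε m 0 ≠ 0 := left_ne_zero_of_mul_eq_one (hskew m 0)
    simpa [hne] using (hmul m 0 0).symm
  simpa [hε0] using hskew 0 m

theorem Submodule.eq_top_of_isUnit_mem {K A : Type*} [CommSemiring K] [Semiring A] [Algebra K A]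
    {I : Submodule K A} (hI : ∀ a x : A, x ∈ I → a * x ∈ I) {u : A} (hu : IsUnit u)
    (huI : u ∈ I) : I = ⊤ :=
  Submodule.eq_top_iff'.mpr fun a => by
    simpa [mul_assoc] using hI (a * ↑hu.unit⁻¹) u huI

theorem gradedDSimple_of_rootVectors_units_general
    {F : Type*} [Field F] [IsAlgClosed F]
    {Γ : Type*} [AddCommGroup Γ] [DecidableEq Γ]
    {A : Type*} [Ring A] [Algebra F A]
    (ε : Γ → Γ → F)
    (hskew : ∀ l m : Γ, ε l m * ε m l = 1)
    (hmul : ∀ l m n : Γ, ε l (m + n) = ε l m * ε l n)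
    (𝒜 : Γ → Submodule F A) [GradedAlgebra 𝒜]
    (D : Submodule F (Module.End F A)) [FiniteDimensional F D]
    (hDgraded : D = Submodule.span F
      {d : Module.End F A | d ∈ D ∧ ∃ γ : Γ, IsHomColorDer ε 𝒜 γ d})
    (hDcomm : ∀ d d' : Module.End F A, d ∈ D → d' ∈ D → ∀ γ γ' : Γ,
      IsHomColorDer ε 𝒜 γ d → IsHomColorDer ε 𝒜 γ' d' →
      d * d' = ε γ γ' • (d' * d))
    (hDlf : ∀ d ∈ D, ∀ v : A, FiniteDimensional F
      (Submodule.span F (Set.range fun n : ℕ => (d ^ n) v)))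
    (hDeig : ∀ d : Module.End F A, d ∈ D → (∃ γ : Γ, IsHomColorDer ε 𝒜 γ d) →
      ∀ (c : F) (v : A), d v = c • v → ∀ γ' : Γ,
        d (DirectSum.decompose 𝒜 v γ' : A) = c • (DirectSum.decompose 𝒜 v γ' : A))
    (hroots : ∀ u : A, u ≠ 0 → (∃ γ : Γ, u ∈ 𝒜 γ) →
      (∀ d : Module.End F A, d ∈ D → (∃ γ : Γ, IsHomColorDer ε 𝒜 γ d) →
        ∃ c : F, d u = c • u) →
      IsUnit u) :
    IsGradedDSimple 𝒜 (D : Set (Module.End F A)) := by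
  intro I hI hIh hID
  refine or_iff_not_imp_left.mpr fun hI₀ => ?_
  obtain ⟨v, hvI, hv₀, hvh⟩ :=
    Submodule.IsHomogeneous.exists_isHomogeneousElem_ne_zero 𝒜 (fun γ x hx => hIh x hx γ) hI₀
  have hDfg : (Submodule.span F {d | d ∈ D ∧ ∃ γ, IsHomColorDer ε 𝒜 γ d}).FG := by
    rw [← hDgraded]
    exact D.fg_iff_finiteDimensional.mpr ‹_›
  obtain ⟨s, hsD, hspan⟩ := (Submodule.fg_span_iff_fg_span_finset_subset _).mp hDfg
  obtain ⟨W, hWfin, hWh, hvW, hWI, hWs⟩ :=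
    exists_finiteDimensional_isHomogeneous_invtSubmodule_between 𝒜 s
      (fun f hf => hDlf f (hsD hf).1)
      (fun f hf x hx => let ⟨_, hγ⟩ := (hsD hf).2;
        Module.End.HasDegree.isHomogeneousElem_apply hγ.1 hx)
      (fun f hf g hg => let ⟨γ, hγ⟩ := (hsD hf).2; let ⟨γ', hγ'⟩ := (hsD hg).2;
        ⟨_, hDcomm g f (hsD hg).1 (hsD hf).1 γ' γ hγ' hγ⟩)
      (p := Submodule.span F {v}) (Submodule.isHomogeneous_span 𝒜 (by simpa using hvh))
      ((Submodule.span_singleton_le_iff_mem v I).mpr hvI) (fun f hf => hID f (hsD hf).1)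
  have hWD (d : Module.End F A) (hd : d ∈ D) : W ∈ d.invtSubmodule :=
    Module.End.mem_invtSubmodule_of_mem_span hWs (hspan ▸ hDgraded ▸ hd)
  obtain ⟨u, huW, hu₀, huh, hueig⟩ :=
    exists_isHomogeneousElem_common_eigenvector ε {d | d.2 ∈ D ∧ IsHomColorDer ε 𝒜 d.1 d.2}
      (bicharacter_zero_left hskew hmul) (fun d hd => hd.2.1)
      (fun d hd d' hd' => hDcomm _ _ hd.1 hd'.1 _ _ hd.2 hd'.2)
      (fun d hd c γ x hx => Module.End.mem_eigenspace_iff.mpr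
        (hDeig d.2 hd.1 ⟨_, hd.2⟩ c x (Module.End.mem_eigenspace_iff.mp hx) γ)) W
      (fun hW => hv₀ (by simpa [hW] using hvW (Submodule.mem_span_singleton_self v)))
      hWh (fun d hd => hWD d.2 hd.1)
  have hu : IsUnit u := hroots u hu₀ huh fun d hd ⟨γ, hγ⟩ => hueig (γ, d) ⟨hd, hγ⟩
  exact Submodule.eq_top_of_isUnit_mem (fun a x hx => (hI a x hx).1) hu (hWI huW)

/-- Let `A` be a `Γ`-graded unital `ε`-commutative algebra over an
algebraically closed field of characteristic zero and `D` a finite-dimensional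
`Γ`-graded `ε`-commutative subspace of locally finite color derivations whose
homogeneous elements have `Γ`-graded eigenspaces.  If every nonzero homogeneous common
eigenvector of the homogeneous elements of `D` is a unit, then `A` is graded
`D`-simple. -/
theorem gradedDSimple_of_rootVectors_units
    {F : Type*} [Field F] [IsAlgClosed F] [CharZero F]
    {Γ : Type*} [AddCommGroup Γ] [DecidableEq Γ]
    {A : Type*} [Ring A] [Algebra F A]
    (ε : Γ → Γ → F)
    (hskew : ∀ l m : Γ, ε l m * ε m l = 1)
    (hmul : ∀ l m n : Γ, ε l (m + n) = ε l m * ε l n)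
    (𝒜 : Γ → Submodule F A) [GradedAlgebra 𝒜]
    (hcomm : ∀ (l m : Γ) (a b : A), a ∈ 𝒜 l → b ∈ 𝒜 m → a * b = ε l m • (b * a))
    (D : Submodule F (Module.End F A)) [FiniteDimensional F D]
    (hDgraded : D = Submodule.span F
      {d : Module.End F A | d ∈ D ∧ ∃ γ : Γ, IsHomColorDer ε 𝒜 γ d})
    (hDcomm : ∀ d d' : Module.End F A, d ∈ D → d' ∈ D → ∀ γ γ' : Γ,
      IsHomColorDer ε 𝒜 γ d → IsHomColorDer ε 𝒜 γ' d' →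
      d * d' = ε γ γ' • (d' * d))
    (hDlf : ∀ d ∈ D, ∀ v : A, FiniteDimensional F
      (Submodule.span F (Set.range fun n : ℕ => (d ^ n) v)))
    (hDeig : ∀ d : Module.End F A, d ∈ D → (∃ γ : Γ, IsHomColorDer ε 𝒜 γ d) →
      ∀ (c : F) (v : A), d v = c • v → ∀ γ' : Γ,
        d (DirectSum.decompose 𝒜 v γ' : A) = c • (DirectSum.decompose 𝒜 v γ' : A))
    (hroots : ∀ u : A, u ≠ 0 → (∃ γ : Γ, u ∈ 𝒜 γ) →
      (∀ d : Module.End F A, d ∈ D → (∃ γ : Γ, IsHomColorDer ε 𝒜 γ d) →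
        ∃ c : F, d u = c • u) →
      IsUnit u) :
    IsGradedDSimple 𝒜 (D : Set (Module.End F A)) :=
  gradedDSimple_of_rootVectors_units_general ε hskew hmul 𝒜 D hDgraded hDcomm hDlf hDeig hroots
end

section
/- Let F be a field, Γ an additive abelian group, ε a skew-symmetric bicharacter of Γ, A a Γ-graded associative unital ε-commutative F-algebra, and D a set of homogeneous color derivations of A such that A is graded D-simple. Call a function χ : D → F a root of A if there exists a nonzero homogeneous u ∈ A with ∂(u) = χ(∂)·u for all ∂ ∈ D. Then every root vanishes on all elements of D of nonzero degree, and the set of roots is closed under addition and negation: if χ and ψ are roots, then so are χ+ψ and −χ. In particular the roots form an additive group of F-valued functions on D. -/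
/-- `χ` is a root of `A` with respect to `D`: some nonzero homogeneous `u ∈ A`
satisfies `∂(u) = χ(∂)·u` for all `∂ ∈ D`. -/
def IsRoot {F : Type*} [Field F] {Γ : Type*} [AddCommGroup Γ]
    {A : Type*} [Ring A] [Algebra F A]
    (𝒜 : Γ → Submodule F A) (D : Set (Module.End F A))
    (χ : Module.End F A → F) : Prop :=
  ∃ u : A, u ≠ 0 ∧ (∃ γ : Γ, u ∈ 𝒜 γ) ∧ ∀ d ∈ D, d u = χ d • u

section Bicharacter

variable {F Γ : Type*} [Field F] {ε : Γ → Γ → F}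

theorem bichar_ne_zero (hskew : ∀ l m : Γ, ε l m * ε m l = 1) (l m : Γ) : ε l m ≠ 0 :=
  left_ne_zero_of_mul_eq_one (hskew l m)

variable [AddCommGroup Γ]

theorem bichar_zero_right (hskew : ∀ l m : Γ, ε l m * ε m l = 1)
    (hmul : ∀ l m n : Γ, ε l (m + n) = ε l m * ε l n) (l : Γ) : ε l 0 = 1 := by
  have h : ε l 0 * ε l 0 = ε l 0 * 1 := by rw [← hmul, add_zero, mul_one]
  exact mul_left_cancel₀ (bichar_ne_zero hskew l 0) h

theorem bichar_zero_left (hskew : ∀ l m : Γ, ε l m * ε m l = 1)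
    (hmul : ∀ l m n : Γ, ε l (m + n) = ε l m * ε l n) (m : Γ) : ε 0 m = 1 := by
  simpa [bichar_zero_right hskew hmul m] using hskew 0 m

end Bicharacter

section Graded

variable {F Γ A : Type*} [Field F] [AddCommGroup Γ] [Ring A] [Algebra F A]
  {ε : Γ → Γ → F} {𝒜 : Γ → Submodule F A}
  {D : Set (Module.End F A)} {deg : Module.End F A → Γ} {χ ψ : Module.End F A → F}
  {γ δ : Γ} {u v : A}

variable (𝒜) in
def IsRootVector (D : Set (Module.End F A)) (χ : Module.End F A → F) (γ : Γ) (u : A) : Prop :=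
  u ≠ 0 ∧ u ∈ 𝒜 γ ∧ ∀ d ∈ D, d u = χ d • u

theorem isRoot_iff : IsRoot 𝒜 D χ ↔ ∃ γ u, IsRootVector 𝒜 D χ γ u :=
  ⟨fun ⟨u, hu, ⟨γ, hγ⟩, hχ⟩ => ⟨γ, u, hu, hγ, hχ⟩,
    fun ⟨γ, u, hu, hγ, hχ⟩ => ⟨u, hu, ⟨γ, hγ⟩, hχ⟩⟩

variable [DecidableEq Γ] [GradedAlgebra 𝒜]

namespace IsHomColorDer

variable {lam : Γ} {d : Module.End F A}

theorem map_mul_of_mem_left (hd : IsHomColorDer ε 𝒜 lam d) {l : Γ} {a : A} (ha : a ∈ 𝒜 l)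
    (b : A) : d (a * b) = d a * b + ε lam l • (a * d b) := by
  induction b using DirectSum.Decomposition.inductionOn 𝒜 with
  | zero => simp
  | homogeneous b => exact hd.2 l _ a b ha b.2
  | add b b' hb hb' => simp only [mul_add, map_add, hb, hb', smul_add]; abel

theorem map_one (hskew : ∀ l m : Γ, ε l m * ε m l = 1)
    (hmul : ∀ l m n : Γ, ε l (m + n) = ε l m * ε l n) (hd : IsHomColorDer ε 𝒜 lam d) :
    d 1 = 0 := by
  have h := hd.2 0 0 1 1 (SetLike.one_mem_graded 𝒜) (SetLike.one_mem_graded 𝒜)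
  rwa [mul_one, one_mul, mul_one, bichar_zero_right hskew hmul, one_smul, left_eq_add] at h

theorem map_mul_mem_range_mulLeft (hd : IsHomColorDer ε 𝒜 lam d) {c : F}
    (hu : u ∈ 𝒜 γ) (hdu : d u = c • u) (b : A) :
    d (u * b) ∈ LinearMap.range (LinearMap.mulLeft F u) := by
  rw [hd.map_mul_of_mem_left hu, hdu, smul_mul_assoc]
  exact add_mem (Submodule.smul_mem _ _ ⟨b, rfl⟩) (Submodule.smul_mem _ _ ⟨d b, rfl⟩)

end IsHomColorDer

theorem mul_mem_range_mulLeft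
    (hcomm : ∀ (l m : Γ) (a b : A), a ∈ 𝒜 l → b ∈ 𝒜 m → a * b = ε l m • (b * a))
    (hu : u ∈ 𝒜 γ) (a b : A) :
    a * (u * b) ∈ LinearMap.range (LinearMap.mulLeft F u) := by
  induction a using DirectSum.Decomposition.inductionOn 𝒜 with
  | zero => simp
  | @homogeneous l a =>
    refine ⟨ε l γ • (a * b), ?_⟩
    rw [LinearMap.mulLeft_apply, mul_smul_comm, ← mul_assoc, ← smul_mul_assoc,
      ← hcomm _ _ _ _ a.2 hu, mul_assoc]
  | add a a' ha ha' => rw [add_mul]; exact add_mem ha ha'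

theorem decompose_mem_range_mulLeft (hu : u ∈ 𝒜 γ) (b : A) (μ : Γ) :
    (DirectSum.decompose 𝒜 (u * b) μ : A) ∈ LinearMap.range (LinearMap.mulLeft F u) := by
  refine ⟨(DirectSum.decompose 𝒜 b (-γ + μ) : A), ?_⟩
  rw [LinearMap.mulLeft_apply, ← DirectSum.coe_decompose_mul_add_of_left_mem 𝒜 hu,
    add_neg_cancel_left]

theorem isRootVector_one [Nontrivial A] (hskew : ∀ l m : Γ, ε l m * ε m l = 1)
    (hmul : ∀ l m n : Γ, ε l (m + n) = ε l m * ε l n)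
    (hD : ∀ d ∈ D, IsHomColorDer ε 𝒜 (deg d) d) : IsRootVector 𝒜 D 0 0 1 :=
  ⟨one_ne_zero, SetLike.one_mem_graded 𝒜, fun d hd => by
    rw [(hD d hd).map_one hskew hmul, Pi.zero_apply, zero_smul]⟩

namespace IsRootVector

theorem apply_eq_zero {lam : Γ} {d : Module.End F A} (hu : IsRootVector 𝒜 D χ γ u)
    (hd : IsHomColorDer ε 𝒜 lam d) (hdD : d ∈ D) (hlam : lam ≠ 0) : χ d = 0 := by
  have h₁ : χ d • u ∈ 𝒜 (lam + γ) := hu.2.2 d hdD ▸ hd.1 γ u hu.2.1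
  have h₂ : χ d • u ∈ 𝒜 γ := Submodule.smul_mem _ _ hu.2.1
  by_contra hχ
  exact hlam (by simpa using DirectSum.degree_eq_of_mem_mem 𝒜 h₁ h₂ (smul_ne_zero hχ hu.1))

theorem bichar_mul_apply (hskew : ∀ l m : Γ, ε l m * ε m l = 1)
    (hmul : ∀ l m n : Γ, ε l (m + n) = ε l m * ε l n)
    (hD : ∀ d ∈ D, IsHomColorDer ε 𝒜 (deg d) d) (hu : IsRootVector 𝒜 D χ γ u)
    {d : Module.End F A} (hdD : d ∈ D) (μ : Γ) : ε (deg d) μ * χ d = χ d := by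
  by_cases h : deg d = 0
  · rw [h, bichar_zero_left hskew hmul, one_mul]
  · rw [hu.apply_eq_zero (hD d hdD) hdD h, mul_zero]

theorem exists_mul_eq_one
    (hcomm : ∀ (l m : Γ) (a b : A), a ∈ 𝒜 l → b ∈ 𝒜 m → a * b = ε l m • (b * a))
    (hD : ∀ d ∈ D, IsHomColorDer ε 𝒜 (deg d) d) (hsimple : IsGradedDSimple 𝒜 D)
    (hu : IsRootVector 𝒜 D χ γ u) : ∃ w, u * w = 1 := by
  set I := LinearMap.range (LinearMap.mulLeft F u)
  have hideal : ∀ a x, x ∈ I → a * x ∈ I ∧ x * a ∈ I := by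
    rintro a _ ⟨b, rfl⟩
    exact ⟨mul_mem_range_mulLeft hcomm hu.2.1 a b, ⟨b * a, (mul_assoc u b a).symm⟩⟩
  have hgraded : ∀ x ∈ I, ∀ μ, (DirectSum.decompose 𝒜 x μ : A) ∈ I := by
    rintro _ ⟨b, rfl⟩ μ
    exact decompose_mem_range_mulLeft hu.2.1 b μ
  have hstable : ∀ d ∈ D, ∀ x ∈ I, d x ∈ I := by
    rintro d hd _ ⟨b, rfl⟩
    exact (hD d hd).map_mul_mem_range_mulLeft hu.2.1 (hu.2.2 d hd) b
  rcases hsimple I hideal hgraded hstable with h | h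
  · have hmem : u ∈ I := ⟨1, mul_one u⟩
    rw [h, Submodule.mem_bot] at hmem
    exact absurd hmem hu.1
  · exact (h ▸ Submodule.mem_top : (1 : A) ∈ I)

theorem exists_inverse (hskew : ∀ l m : Γ, ε l m * ε m l = 1)
    (hcomm : ∀ (l m : Γ) (a b : A), a ∈ 𝒜 l → b ∈ 𝒜 m → a * b = ε l m • (b * a))
    (hD : ∀ d ∈ D, IsHomColorDer ε 𝒜 (deg d) d) (hsimple : IsGradedDSimple 𝒜 D)
    (hu : IsRootVector 𝒜 D χ γ u) : ∃ w ∈ 𝒜 (-γ), u * w = 1 ∧ w * u = 1 := by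
  obtain ⟨w, hw⟩ := hu.exists_mul_eq_one hcomm hD hsimple
  set w' : A := (DirectSum.decompose 𝒜 w (-γ) : A)
  have hw' : w' ∈ 𝒜 (-γ) := SetLike.coe_mem _
  have huw' : u * w' = 1 := by
    rw [← DirectSum.coe_decompose_mul_add_of_left_mem 𝒜 hu.2.1, hw, add_neg_cancel,
      DirectSum.decompose_of_mem_same 𝒜 (SetLike.one_mem_graded 𝒜)]
  -- `w' * u = ε (-γ) γ • 1`, so a rescaling of `w'` is a left inverse, hence equal to `w'`.
  have hleft : ((ε (-γ) γ)⁻¹ • w') * u = 1 := by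
    rw [smul_mul_assoc, hcomm _ _ _ _ hw' hu.2.1, huw', smul_smul,
      inv_mul_cancel₀ (bichar_ne_zero hskew _ _), one_smul]
  exact ⟨w', hw', huw', left_inv_eq_right_inv hleft huw' ▸ hleft⟩

theorem mul (hskew : ∀ l m : Γ, ε l m * ε m l = 1)
    (hmul : ∀ l m n : Γ, ε l (m + n) = ε l m * ε l n)
    (hcomm : ∀ (l m : Γ) (a b : A), a ∈ 𝒜 l → b ∈ 𝒜 m → a * b = ε l m • (b * a))
    (hD : ∀ d ∈ D, IsHomColorDer ε 𝒜 (deg d) d) (hsimple : IsGradedDSimple 𝒜 D)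
    (hu : IsRootVector 𝒜 D χ γ u) (hv : IsRootVector 𝒜 D ψ δ v) :
    IsRootVector 𝒜 D (χ + ψ) (γ + δ) (u * v) := by
  obtain ⟨w, -, -, hwu⟩ := hu.exists_inverse hskew hcomm hD hsimple
  refine ⟨fun huv => hv.1 ?_, SetLike.mul_mem_graded hu.2.1 hv.2.1, fun d hd => ?_⟩
  · rw [← one_mul v, ← hwu, mul_assoc, huv, mul_zero]
  · rw [(hD d hd).map_mul_of_mem_left hu.2.1, hu.2.2 d hd, hv.2.2 d hd, smul_mul_assoc,
      mul_smul_comm, smul_smul, hv.bichar_mul_apply hskew hmul hD hd, Pi.add_apply, add_smul]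

theorem inv [Nontrivial A] (hskew : ∀ l m : Γ, ε l m * ε m l = 1)
    (hmul : ∀ l m n : Γ, ε l (m + n) = ε l m * ε l n)
    (hcomm : ∀ (l m : Γ) (a b : A), a ∈ 𝒜 l → b ∈ 𝒜 m → a * b = ε l m • (b * a))
    (hD : ∀ d ∈ D, IsHomColorDer ε 𝒜 (deg d) d) (hsimple : IsGradedDSimple 𝒜 D)
    (hu : IsRootVector 𝒜 D χ γ u) : ∃ w, IsRootVector 𝒜 D (-χ) (-γ) w := by
  obtain ⟨w, hw, huw, hwu⟩ := hu.exists_inverse hskew hcomm hD hsimple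
  refine ⟨w, fun hw0 => one_ne_zero (by rw [← huw, hw0, mul_zero]), hw, fun d hd => ?_⟩
  have h := congrArg (w * ·) ((hD d hd).map_mul_of_mem_left hu.2.1 w)
  simp only [huw, (hD d hd).map_one hskew hmul, hu.2.2 d hd, mul_zero, mul_add, smul_mul_assoc,
    mul_smul_comm, ← mul_assoc, hwu, one_mul, mul_one] at h
  apply smul_right_injective A (bichar_ne_zero hskew (deg d) γ)
  dsimp only
  rw [eq_neg_of_add_eq_zero_right h.symm, smul_smul, Pi.neg_apply, mul_neg,
    hu.bichar_mul_apply hskew hmul hD hd, neg_smul]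

end IsRootVector

end Graded

/-- For a graded `D`-simple `ε`-commutative `Γ`-graded unital algebra,
every root vanishes on all derivations of nonzero degree, and roots are closed under
addition and negation; in particular they form an additive group of `F`-valued
functions. -/
theorem roots_form_group
    {F : Type*} [Field F] {Γ : Type*} [AddCommGroup Γ] [DecidableEq Γ]
    {A : Type*} [Ring A] [Algebra F A] [Nontrivial A]
    (ε : Γ → Γ → F)
    (hskew : ∀ l m : Γ, ε l m * ε m l = 1)
    (hmul : ∀ l m n : Γ, ε l (m + n) = ε l m * ε l n)
    (𝒜 : Γ → Submodule F A) [GradedAlgebra 𝒜]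
    (hcomm : ∀ (l m : Γ) (a b : A), a ∈ 𝒜 l → b ∈ 𝒜 m → a * b = ε l m • (b * a))
    (D : Set (Module.End F A)) (deg : Module.End F A → Γ)
    (hD : ∀ d ∈ D, IsHomColorDer ε 𝒜 (deg d) d)
    (hsimple : IsGradedDSimple 𝒜 D) :
    (∀ χ : Module.End F A → F, IsRoot 𝒜 D χ → ∀ d ∈ D, deg d ≠ 0 → χ d = 0) ∧
    (∀ χ ψ : Module.End F A → F, IsRoot 𝒜 D χ → IsRoot 𝒜 D ψ →
      IsRoot 𝒜 D (χ + ψ)) ∧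
    (∀ χ : Module.End F A → F, IsRoot 𝒜 D χ → IsRoot 𝒜 D (-χ)) ∧
    (∃ H : AddSubgroup (Module.End F A → F),
      (H : Set (Module.End F A → F)) = {χ | IsRoot 𝒜 D χ}) := by
  have hzero : IsRoot 𝒜 D 0 := isRoot_iff.2 ⟨0, 1, isRootVector_one hskew hmul hD⟩
  have hadd : ∀ χ ψ, IsRoot 𝒜 D χ → IsRoot 𝒜 D ψ → IsRoot 𝒜 D (χ + ψ) := by
    intro χ ψ hχ hψ
    obtain ⟨γ, u, hu⟩ := isRoot_iff.1 hχ
    obtain ⟨δ, v, hv⟩ := isRoot_iff.1 hψ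
    exact isRoot_iff.2 ⟨γ + δ, u * v, hu.mul hskew hmul hcomm hD hsimple hv⟩
  have hneg : ∀ χ, IsRoot 𝒜 D χ → IsRoot 𝒜 D (-χ) := by
    intro χ hχ
    obtain ⟨γ, u, hu⟩ := isRoot_iff.1 hχ
    obtain ⟨w, hw⟩ := hu.inv hskew hmul hcomm hD hsimple
    exact isRoot_iff.2 ⟨-γ, w, hw⟩
  refine ⟨fun χ hχ d hd hdeg => ?_, hadd, hneg,
    ⟨{ carrier := {χ | IsRoot 𝒜 D χ}
       zero_mem' := hzero
       add_mem' := hadd _ _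
       neg_mem' := hneg _ }, rfl⟩⟩
  obtain ⟨γ, u, hu⟩ := isRoot_iff.1 hχ
  exact hu.apply_eq_zero (hD d hd) hd hdeg
end

section
/- Let F be an algebraically closed field of characteristic zero, Γ an additive abelian group, ε a skew-symmetric bicharacter of Γ, and A a Γ-graded associative unital ε-commutative F-algebra. Let D be a finite-dimensional Γ-graded F-subspace of color derivations of A such that every homogeneous element of D is a homogeneous color derivation, D is ε-commutative (∂∘∂' = ε(∂̄,∂̄')·∂'∘∂ for all homogeneous ∂,∂' ∈ D), every element of D is locally finite on A, every eigenspace of every homogeneous element of D is a Γ-graded subspace of A, and A is graded D-simple. Let A(0)^{(m)} denote the generalized weight space of the zero weight (defined with respect to the set of homogeneous elements of D) and A(0) = ∪_{m∈ℕ} A(0)^{(m)}. Then A(0) is contained in (hence equal to) the unital F-subalgebra of A generated by A(0)^{(1)}. -/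
/-- The generalized weight space `A(χ)^{(m)}`: the set of `u ∈ A` killed by every
composition `(d₁ − χ(d₁))∘⋯∘(d_{m+1} − χ(d_{m+1}))` with `d₁,…,d_{m+1} ∈ D`. -/
def wtSpace {F : Type*} [Field F] {A : Type*} [Ring A] [Algebra F A]
    (D : Set (Module.End F A)) (χ : Module.End F A → F) : ℕ → Set A
  | 0 => {u : A | ∀ d ∈ D, d u - χ d • u = 0}
  | n + 1 => {u : A | ∀ d ∈ D, d u - χ d • u ∈ wtSpace D χ n}

open DirectSum

structure IsSkewBicharacter {F Γ : Type*} [Field F] [AddCommGroup Γ] (ε : Γ → Γ → F) :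
    Prop where
  mul_swap : ∀ l m, ε l m * ε m l = 1
  map_add_right : ∀ l m n, ε l (m + n) = ε l m * ε l n

namespace IsSkewBicharacter

variable {F Γ : Type*} [Field F] [AddCommGroup Γ] {ε : Γ → Γ → F}

theorem ne_zero (hε : IsSkewBicharacter ε) (l m : Γ) : ε l m ≠ 0 :=
  left_ne_zero_of_mul_eq_one (hε.mul_swap l m)

theorem apply_zero_right (hε : IsSkewBicharacter ε) (l : Γ) : ε l 0 = 1 := by
  have h := hε.map_add_right l 0 0
  rw [add_zero] at h
  exact (mul_eq_left₀ (hε.ne_zero l 0)).1 h.symm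

end IsSkewBicharacter

section ColorDerivation

variable {F : Type*} [Field F] {Γ : Type*} [AddCommGroup Γ] {A : Type*} [Ring A] [Algebra F A]
  {ε : Γ → Γ → F} {𝒜 : Γ → Submodule F A}

def IsColorCommutative (ε : Γ → Γ → F) (𝒜 : Γ → Submodule F A) (S : Set (Module.End F A)) :
    Prop :=
  ∀ d ∈ S, ∀ d' ∈ S, ∀ γ γ' : Γ, IsHomColorDer ε 𝒜 γ d → IsHomColorDer ε 𝒜 γ' d' →
    d * d' = ε γ γ' • (d' * d)

namespace IsColorCommutative

variable {S : Set (Module.End F A)}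

theorem apply_apply_eq_zero (hc : IsColorCommutative ε 𝒜 S)
    (hS : ∀ d ∈ S, ∃ γ, IsHomColorDer ε 𝒜 γ d) {d f : Module.End F A} (hd : d ∈ S)
    (hf : f ∈ S) {x : A} (hx : d x = 0) : d (f x) = 0 := by
  obtain ⟨γ, hγ⟩ := hS d hd
  obtain ⟨γ', hγ'⟩ := hS f hf
  rw [← Module.End.mul_apply, hc d hd f hf γ γ' hγ hγ', LinearMap.smul_apply,
    Module.End.mul_apply, hx, map_zero, smul_zero]

theorem apply_pow_apply_eq_zero (hc : IsColorCommutative ε 𝒜 S)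
    (hS : ∀ d ∈ S, ∃ γ, IsHomColorDer ε 𝒜 γ d) {d f : Module.End F A} (hd : d ∈ S)
    (hf : f ∈ S) {x : A} (hx : d x = 0) (j : ℕ) : d ((f ^ j) x) = 0 := by
  induction j with
  | zero => exact hx
  | succ j ih => rw [pow_succ', Module.End.mul_apply]; exact hc.apply_apply_eq_zero hS hd hf ih

theorem mul_self_eq_zero (hc : IsColorCommutative ε 𝒜 S) {f : Module.End F A} (hf : f ∈ S)
    {γ : Γ} (hγ : IsHomColorDer ε 𝒜 γ f) (hγγ : ε γ γ ≠ 1) : f * f = 0 := by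
  have h : (1 - ε γ γ) • (f * f) = 0 := by
    rw [sub_smul 1 (ε γ γ) (f * f), one_smul, ← hc f hf f hf γ γ hγ hγ, sub_self]
  exact (smul_eq_zero.1 h).resolve_left (sub_ne_zero.2 hγγ.symm)

end IsColorCommutative

namespace IsHomColorDer

variable {γ : Γ} {d : Module.End F A}

theorem pow_apply_mem (hd : IsHomColorDer ε 𝒜 γ d) {a : A} {μ : Γ} (ha : a ∈ 𝒜 μ) (j : ℕ) :
    (d ^ j) a ∈ 𝒜 (j • γ + μ) := by
  induction j with
  | zero => simpa using ha
  | succ j ih =>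
    rw [pow_succ', Module.End.mul_apply, succ_nsmul', add_assoc]
    exact hd.1 _ _ ih

variable [DecidableEq Γ] [GradedAlgebra 𝒜]

theorem map_mul (hd : IsHomColorDer ε 𝒜 γ d) {a : A} {l : Γ} (ha : a ∈ 𝒜 l) (b : A) :
    d (a * b) = d a * b + ε γ l • (a * d b) := by
  induction b using DirectSum.Decomposition.inductionOn 𝒜 with
  | zero => simp
  | homogeneous b => exact hd.2 l _ a b ha b.2
  | add b b' hb hb' => rw [mul_add, map_add, hb, hb', map_add, mul_add, mul_add, smul_add]; abel

theorem map_one_s16 (hd : IsHomColorDer ε 𝒜 γ d) (hε : IsSkewBicharacter ε) : d 1 = 0 := by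
  have h := hd.map_mul (SetLike.one_mem_graded 𝒜) 1
  simp only [mul_one, one_mul, hε.apply_zero_right, one_smul] at h
  exact left_eq_add.1 h

theorem map_pow_eq_zero (hd : IsHomColorDer ε 𝒜 γ d) (hε : IsSkewBicharacter ε) {a : A}
    {α : Γ} (ha : a ∈ 𝒜 α) (hda : d a = 0) (j : ℕ) : d (a ^ j) = 0 := by
  induction j with
  | zero => rw [pow_zero, hd.map_one_s16 hε]
  | succ j ih => rw [pow_succ', hd.map_mul ha, hda, ih, zero_mul, mul_zero, smul_zero, add_zero]

theorem decompose_apply (hd : IsHomColorDer ε 𝒜 γ d) (x : A) (μ : Γ) :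
    (decompose 𝒜 (d x) (γ + μ) : A) = d (decompose 𝒜 x μ) := by
  induction x using DirectSum.Decomposition.inductionOn 𝒜 with
  | zero => simp
  | @homogeneous ν x =>
    by_cases h : ν = μ
    · subst h
      rw [decompose_of_mem_same 𝒜 (hd.1 _ _ x.2), decompose_of_mem_same 𝒜 x.2]
    · rw [decompose_of_mem_ne 𝒜 (hd.1 _ _ x.2) (by simpa using h),
        decompose_of_mem_ne 𝒜 x.2 h, map_zero]
  | add x x' hx hx' =>
    simp only [map_add, decompose_add, DirectSum.add_apply, Submodule.coe_add, hx, hx']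

theorem map_pow_mul (hd : IsHomColorDer ε 𝒜 γ d) {t : A} (ht : t ∈ 𝒜 (-γ)) (hdt : d t = 1)
    (hγ : ε γ (-γ) = 1) (j : ℕ) (x : A) :
    d (t ^ (j + 1) * x) = ((j + 1 : ℕ) : F) • (t ^ j * x) + t ^ (j + 1) * d x := by
  induction j with
  | zero => simp [hd.map_mul ht, hdt, hγ]
  | succ j ih =>
    rw [pow_succ' t (j + 1), mul_assoc, hd.map_mul ht, hdt, one_mul, hγ, one_smul, ih, mul_add,
      mul_smul_comm, ← mul_assoc, ← pow_succ', ← mul_assoc, ← pow_succ', Nat.cast_succ (j + 1),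
      add_smul, one_smul]
    abel

end IsHomColorDer

end ColorDerivation

section ZeroWeightLevel

variable {F : Type*} [Field F] {A : Type*} [Ring A] [Algebra F A] {S : Set (Module.End F A)}

def zeroWeightLevel (S : Set (Module.End F A)) : ℕ → Submodule F A
  | 0 => ⨅ d ∈ S, LinearMap.ker d
  | n + 1 => ⨅ d ∈ S, (zeroWeightLevel S n).comap d

theorem mem_zeroWeightLevel_zero {u : A} : u ∈ zeroWeightLevel S 0 ↔ ∀ d ∈ S, d u = 0 := by
  simp [zeroWeightLevel]

theorem mem_zeroWeightLevel_succ {n : ℕ} {u : A} :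
    u ∈ zeroWeightLevel S (n + 1) ↔ ∀ d ∈ S, d u ∈ zeroWeightLevel S n := by
  simp [zeroWeightLevel]

theorem coe_zeroWeightLevel (n : ℕ) : (zeroWeightLevel S n : Set A) = wtSpace S 0 n := by
  induction n with
  | zero => ext u; simp [mem_zeroWeightLevel_zero, wtSpace]
  | succ n ih => ext u; simp [mem_zeroWeightLevel_succ, wtSpace, ← ih]

theorem zeroWeightLevel_mono : Monotone (zeroWeightLevel S) := by
  refine monotone_nat_of_le_succ fun n => ?_
  induction n with
  | zero =>
    intro u hu
    refine mem_zeroWeightLevel_succ.2 fun d hd => ?_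
    rw [mem_zeroWeightLevel_zero.1 hu d hd]
    exact zero_mem _
  | succ n ih =>
    exact fun u hu => mem_zeroWeightLevel_succ.2 fun d hd => ih (mem_zeroWeightLevel_succ.1 hu d hd)

theorem pow_apply_mem_zeroWeightLevel {d : Module.End F A} (hd : d ∈ S) {n j : ℕ} {u : A}
    (hu : u ∈ zeroWeightLevel S (n + j)) : (d ^ j) u ∈ zeroWeightLevel S n := by
  induction j generalizing u with
  | zero => exact hu
  | succ j ih =>
    rw [pow_succ, Module.End.mul_apply]
    exact ih (mem_zeroWeightLevel_succ.1 hu d hd)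

theorem pow_apply_eq_zero_of_mem_zeroWeightLevel {d : Module.End F A} (hd : d ∈ S) {n : ℕ}
    {u : A} (hu : u ∈ zeroWeightLevel S n) : (d ^ (n + 1)) u = 0 := by
  rw [pow_succ', Module.End.mul_apply]
  exact mem_zeroWeightLevel_zero.1 (pow_apply_mem_zeroWeightLevel hd (by rwa [zero_add])) d hd

theorem exists_mem_zeroWeightLevel_one_notMem_zero (P : A → Prop)
    (hP : ∀ x, P x → ∀ d ∈ S, P (d x)) {n : ℕ} {x : A} (hxn : x ∈ zeroWeightLevel S n)
    (hPx : P x) (hx0 : x ∉ zeroWeightLevel S 0) :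
    ∃ v, P v ∧ v ∈ zeroWeightLevel S 1 ∧ v ∉ zeroWeightLevel S 0 := by
  induction n generalizing x with
  | zero => exact absurd hxn hx0
  | succ n ih =>
    by_cases hx1 : x ∈ zeroWeightLevel S 1
    · exact ⟨x, hPx, hx1, hx0⟩
    · obtain ⟨d, hd, hdx⟩ : ∃ d ∈ S, d x ∉ zeroWeightLevel S 0 := by
        simpa [mem_zeroWeightLevel_succ] using hx1
      exact ih (mem_zeroWeightLevel_succ.1 hxn d hd) (hP x hPx d hd) hdx

variable {Γ : Type*} [AddCommGroup Γ] [DecidableEq Γ] {ε : Γ → Γ → F}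
  {𝒜 : Γ → Submodule F A} [GradedAlgebra 𝒜]

theorem decompose_mem_zeroWeightLevel (hS : ∀ d ∈ S, ∃ γ, IsHomColorDer ε 𝒜 γ d) {n : ℕ}
    {u : A} (hu : u ∈ zeroWeightLevel S n) (μ : Γ) :
    (decompose 𝒜 u μ : A) ∈ zeroWeightLevel S n := by
  induction n generalizing u μ with
  | zero =>
    refine mem_zeroWeightLevel_zero.2 fun d hd => ?_
    obtain ⟨γ, hγ⟩ := hS d hd
    rw [← hγ.decompose_apply, mem_zeroWeightLevel_zero.1 hu d hd, decompose_zero,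
      DirectSum.zero_apply, ZeroMemClass.coe_zero]
  | succ n ih =>
    refine mem_zeroWeightLevel_succ.2 fun d hd => ?_
    obtain ⟨γ, hγ⟩ := hS d hd
    rw [← hγ.decompose_apply]
    exact ih (mem_zeroWeightLevel_succ.1 hu d hd) _

theorem mul_mem_zeroWeightLevel (hS : ∀ d ∈ S, ∃ γ, IsHomColorDer ε 𝒜 γ d) {a b : A}
    {α : Γ} (ha : a ∈ 𝒜 α) {p q : ℕ} (hap : a ∈ zeroWeightLevel S p)
    (hbq : b ∈ zeroWeightLevel S q) : a * b ∈ zeroWeightLevel S (p + q) := by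
  induction hn : p + q generalizing p q a b α with
  | zero =>
    obtain ⟨rfl, rfl⟩ : p = 0 ∧ q = 0 := by omega
    refine mem_zeroWeightLevel_zero.2 fun d hd => ?_
    obtain ⟨γ, hγ⟩ := hS d hd
    rw [hγ.map_mul ha, mem_zeroWeightLevel_zero.1 hap d hd, mem_zeroWeightLevel_zero.1 hbq d hd,
      zero_mul, mul_zero, smul_zero, add_zero]
  | succ n ih =>
    refine mem_zeroWeightLevel_succ.2 fun d hd => ?_
    obtain ⟨γ, hγ⟩ := hS d hd
    rw [hγ.map_mul ha]
    refine add_mem ?_ (Submodule.smul_mem _ _ ?_)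
    · rcases p with _ | p
      · rw [mem_zeroWeightLevel_zero.1 hap d hd, zero_mul]; exact zero_mem _
      · exact ih (hγ.1 _ _ ha) (mem_zeroWeightLevel_succ.1 hap d hd) hbq (by omega)
    · rcases q with _ | q
      · rw [mem_zeroWeightLevel_zero.1 hbq d hd, mul_zero]; exact zero_mem _
      · exact ih ha hap (mem_zeroWeightLevel_succ.1 hbq d hd) (by omega)

theorem pow_mem_zeroWeightLevel (hS : ∀ d ∈ S, ∃ γ, IsHomColorDer ε 𝒜 γ d)
    (hε : IsSkewBicharacter ε) {t : A} {α : Γ} (ht : t ∈ 𝒜 α)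
    (ht1 : t ∈ zeroWeightLevel S 1) (j : ℕ) : t ^ j ∈ zeroWeightLevel S j := by
  induction j with
  | zero =>
    refine mem_zeroWeightLevel_zero.2 fun d hd => ?_
    obtain ⟨γ, hγ⟩ := hS d hd
    rw [pow_zero, hγ.map_one_s16 hε]
  | succ j ih =>
    rw [pow_succ', add_comm]
    exact mul_mem_zeroWeightLevel hS ht ht1 ih

end ZeroWeightLevel

section GradedSimple

variable {F : Type*} [Field F] {Γ : Type*} [AddCommGroup Γ] [DecidableEq Γ]
  {A : Type*} [Ring A] [Algebra F A] {ε : Γ → Γ → F} {𝒜 : Γ → Submodule F A} [GradedAlgebra 𝒜]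
  {S D : Set (Module.End F A)}

theorem range_mulLeft_eq_top
    (hcomm : ∀ (l m : Γ) (a b : A), a ∈ 𝒜 l → b ∈ 𝒜 m → a * b = ε l m • (b * a))
    (hS : ∀ d ∈ S, ∃ γ, IsHomColorDer ε 𝒜 γ d) (hDS : D ⊆ Submodule.span F S)
    (hsimple : IsGradedDSimple 𝒜 D) {s : A} {δ : Γ} (hs : s ∈ 𝒜 δ) (hs0 : s ≠ 0)
    (hsS : s ∈ zeroWeightLevel S 0) : LinearMap.range (LinearMap.mulLeft F s) = ⊤ := by
  refine (hsimple _ ?_ ?_ ?_).resolve_left ?_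
  · rintro a _ ⟨y, rfl⟩
    refine ⟨?_, ⟨y * a, by simp [mul_assoc]⟩⟩
    induction a using DirectSum.Decomposition.inductionOn 𝒜 with
    | zero => rw [zero_mul]; exact zero_mem _
    | @homogeneous μ a =>
      refine ⟨ε μ δ • (a * y), ?_⟩
      rw [LinearMap.mulLeft_apply, LinearMap.mulLeft_apply, mul_smul_comm, ← mul_assoc,
        ← mul_assoc, ← smul_mul_assoc, ← hcomm μ δ a s a.2 hs]
    | add a a' ha ha' => rw [add_mul]; exact add_mem ha ha'
  · rintro _ ⟨y, rfl⟩ γ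
    refine ⟨decompose 𝒜 y (γ - δ), ?_⟩
    rw [LinearMap.mulLeft_apply, LinearMap.mulLeft_apply,
      ← coe_decompose_mul_add_of_left_mem 𝒜 hs, add_sub_cancel]
  · rintro d hd _ ⟨y, rfl⟩
    replace hd := hDS hd
    induction hd using Submodule.span_induction with
    | mem e he =>
      obtain ⟨γ, hγ⟩ := hS e he
      refine ⟨ε γ δ • e y, ?_⟩
      rw [LinearMap.mulLeft_apply, LinearMap.mulLeft_apply, hγ.map_mul hs,
        mem_zeroWeightLevel_zero.1 hsS e he, zero_mul, zero_add, mul_smul_comm]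
    | zero => exact zero_mem _
    | add e e' _ _ he he' => exact add_mem he he'
    | smul c e _ he => exact Submodule.smul_mem _ c he
  · intro h
    exact hs0 ((Submodule.mem_bot F).1 (h ▸ ⟨1, mul_one s⟩))

theorem exists_mul_eq_one_of_mem_zeroWeightLevel_zero (hε : IsSkewBicharacter ε)
    (hcomm : ∀ (l m : Γ) (a b : A), a ∈ 𝒜 l → b ∈ 𝒜 m → a * b = ε l m • (b * a))
    (hS : ∀ d ∈ S, ∃ γ, IsHomColorDer ε 𝒜 γ d) (hDS : D ⊆ Submodule.span F S)
    (hsimple : IsGradedDSimple 𝒜 D) {s : A} {δ : Γ} (hs : s ∈ 𝒜 δ) (hs0 : s ≠ 0)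
    (hsS : s ∈ zeroWeightLevel S 0) :
    ∃ r ∈ 𝒜 (-δ), r ∈ zeroWeightLevel S 0 ∧ s * r = 1 := by
  obtain ⟨y, hy⟩ : (1 : A) ∈ LinearMap.range (LinearMap.mulLeft F s) := by
    rw [range_mulLeft_eq_top hcomm hS hDS hsimple hs hs0 hsS]; trivial
  set r : A := (decompose 𝒜 y (-δ) : A)
  have hsr : s * r = 1 := by
    rw [← coe_decompose_mul_add_of_left_mem 𝒜 hs, add_neg_cancel,
      ← LinearMap.mulLeft_apply (R := F), hy, decompose_of_mem_same 𝒜 (SetLike.one_mem_graded 𝒜)]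
  refine ⟨r, SetLike.coe_mem _, mem_zeroWeightLevel_zero.2 fun d hd => ?_, hsr⟩
  obtain ⟨γ, hγ⟩ := hS d hd
  have hsdr : s * d r = 0 := by
    have h := hγ.map_mul hs r
    rw [hsr, hγ.map_one_s16 hε, mem_zeroWeightLevel_zero.1 hsS d hd, zero_mul, zero_add] at h
    exact (smul_eq_zero.1 h.symm).resolve_left (hε.ne_zero γ δ)
  have hdrs : d r * s = 0 := by
    rw [hcomm _ _ _ _ (hγ.1 _ _ (SetLike.coe_mem _)) hs, hsdr, smul_zero]
  calc d r = d r * (s * r) := by rw [hsr, mul_one]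
    _ = 0 := by rw [← mul_assoc, hdrs, zero_mul]

theorem exists_apply_eq_one (hε : IsSkewBicharacter ε)
    (hcomm : ∀ (l m : Γ) (a b : A), a ∈ 𝒜 l → b ∈ 𝒜 m → a * b = ε l m • (b * a))
    (hS : ∀ d ∈ S, ∃ γ, IsHomColorDer ε 𝒜 γ d) (hc : IsColorCommutative ε 𝒜 S)
    (hDS : D ⊆ Submodule.span F S) (hsimple : IsGradedDSimple 𝒜 D) {u : A} {μ : Γ}
    (hu : u ∈ 𝒜 μ) {n : ℕ} (hun : u ∈ zeroWeightLevel S n) (hu0 : u ∉ zeroWeightLevel S 0) :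
    ∃ f ∈ S, ∃ γ, IsHomColorDer ε 𝒜 γ f ∧ f u ≠ 0 ∧ ∃ t ∈ 𝒜 (-γ),
      t ∈ zeroWeightLevel S 1 ∧ f t = 1 ∧ ∀ d ∈ S, d u = 0 → d t = 0 := by
  set P : A → Prop := fun x => (∃ ν, x ∈ 𝒜 ν) ∧ ∀ d ∈ S, d u = 0 → d x = 0
  have hP : ∀ x, P x → ∀ d ∈ S, P (d x) := by
    rintro x ⟨⟨ν, hx⟩, hxu⟩ d hd
    obtain ⟨γ, hγ⟩ := hS d hd
    exact ⟨⟨γ + ν, hγ.1 _ _ hx⟩,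
      fun d' hd' hd'u => hc.apply_apply_eq_zero hS hd' hd (hxu d' hd' hd'u)⟩
  obtain ⟨v, ⟨⟨ν, hv⟩, hvu⟩, hv1, hv0⟩ :=
    exists_mem_zeroWeightLevel_one_notMem_zero P hP hun ⟨⟨μ, hu⟩, fun _ _ h => h⟩ hu0
  obtain ⟨f, hf, hfv⟩ : ∃ f ∈ S, f v ≠ 0 := by simpa [mem_zeroWeightLevel_zero] using hv0
  obtain ⟨γ, hγ⟩ := hS f hf
  obtain ⟨r, hr, hr0, hfvr⟩ := exists_mul_eq_one_of_mem_zeroWeightLevel_zero hε hcomm hS hDS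
    hsimple (hγ.1 _ _ hv) hfv (mem_zeroWeightLevel_succ.1 hv1 f hf)
  have hdr : ∀ d ∈ S, d r = 0 := mem_zeroWeightLevel_zero.1 hr0
  refine ⟨f, hf, γ, hγ, fun hfu => hfv (hvu f hf hfu), v * r, ?_, ?_, ?_, ?_⟩
  · have hdeg : ν + -(γ + ν) = -γ := by abel
    simpa only [hdeg] using SetLike.mul_mem_graded hv hr
  · simpa using mul_mem_zeroWeightLevel hS hv hv1 hr0
  · rw [hγ.map_mul hv, hdr f hf, mul_zero, smul_zero, add_zero, hfvr]
  · intro d hd hdu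
    obtain ⟨δ, hδ⟩ := hS d hd
    rw [hδ.map_mul hv, hvu d hd hdu, hdr d hd, zero_mul, mul_zero, smul_zero, add_zero]

end GradedSimple

section TaylorCorrection

variable {F : Type*} [Field F] {A : Type*} [Ring A] [Algebra F A]

noncomputable def taylorCorrection (f : Module.End F A) (t u : A) (N : ℕ) : A :=
  ∑ j ∈ Finset.range (N + 1), ((-1 : F) ^ j / j.factorial) • (t ^ j * (f ^ j) u)

variable {f : Module.End F A} {t u : A} {N : ℕ}

theorem taylorCorrection_mem {W : Submodule F A} (h : ∀ j ≤ N, t ^ j * (f ^ j) u ∈ W) :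
    taylorCorrection f t u N ∈ W :=
  Submodule.sum_mem _ fun j hj => W.smul_mem _ (h j (Nat.lt_succ_iff.1 (Finset.mem_range.1 hj)))

theorem sub_taylorCorrection_mem (B : Subalgebra F A) (ht : t ∈ B)
    (hu : ∀ j < N, (f ^ (j + 1)) u ∈ B) : u - taylorCorrection f t u N ∈ B := by
  rw [taylorCorrection, Finset.sum_range_succ']
  simp only [pow_zero, Nat.factorial_zero, Nat.cast_one, div_one, one_mul, one_smul,
    Module.End.one_apply, sub_add_cancel_right]
  exact neg_mem (sum_mem fun j hj =>
    B.smul_mem (mul_mem (pow_mem ht _) (hu j (Finset.mem_range.1 hj))) _)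

variable {Γ : Type*} [AddCommGroup Γ] [DecidableEq Γ] {ε : Γ → Γ → F}
  {𝒜 : Γ → Submodule F A} [GradedAlgebra 𝒜] {γ : Γ}

theorem IsHomColorDer.map_taylorCorrection [CharZero F] (hf : IsHomColorDer ε 𝒜 γ f)
    (ht : t ∈ 𝒜 (-γ)) (hft : f t = 1) (hγ : ε γ (-γ) = 1) :
    f (taylorCorrection f t u N) = ((-1 : F) ^ N / N.factorial) • (t ^ N * (f ^ (N + 1)) u) := by
  induction N with
  | zero => simp [taylorCorrection]
  | succ N ih =>
    have hcoeff : (-1 : F) ^ N / N.factorial + (-1) ^ (N + 1) / (N + 1).factorial * (N + 1 : ℕ)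
        = 0 := by
      rw [Nat.factorial_succ]
      push_cast
      field_simp
      ring
    rw [taylorCorrection, Finset.sum_range_succ, map_add, ← taylorCorrection, ih, map_smul,
      hf.map_pow_mul ht hft hγ, smul_add, smul_smul, ← add_assoc, ← add_smul, hcoeff, zero_smul,
      zero_add, ← Module.End.mul_apply, ← pow_succ']

theorem IsHomColorDer.map_taylorCorrection_one (hf : IsHomColorDer ε 𝒜 γ f) (ht : t ∈ 𝒜 (-γ))
    (hft : f t = 1) (hff : f * f = 0) : f (taylorCorrection f t u 1) = 0 := by
  have hffu : f (f u) = 0 := by rw [← Module.End.mul_apply, hff, LinearMap.zero_apply]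
  simp [taylorCorrection, Finset.sum_range_succ, hf.map_mul ht, hft, hffu]

end TaylorCorrection

section AnnihilatingSpan

variable {F : Type*} [Field F] {A : Type*} [Ring A] [Algebra F A] {S : Set (Module.End F A)}

def annihilatingSpan (S : Set (Module.End F A)) (u : A) : Submodule F (Module.End F A) :=
  Submodule.span F {d | d ∈ S ∧ d u = 0}

theorem annihilatingSpan_le {D : Submodule F (Module.End F A)} (hSD : S ⊆ D) (u : A) :
    annihilatingSpan S u ≤ D :=
  Submodule.span_le.2 fun _ hd => hSD hd.1

theorem annihilatingSpan_lt {u u' : A} (h : ∀ d ∈ S, d u = 0 → d u' = 0)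
    {f : Module.End F A} (hf : f ∈ S) (hfu : f u ≠ 0) (hfu' : f u' = 0) :
    annihilatingSpan S u < annihilatingSpan S u' := by
  refine SetLike.lt_iff_le_and_exists.2 ⟨Submodule.span_mono fun d hd => ⟨hd.1, h d hd.1 hd.2⟩,
    f, Submodule.subset_span ⟨hf, hfu'⟩, fun hfS => hfu ?_⟩
  have hker : annihilatingSpan S u ≤ LinearMap.ker (LinearMap.applyₗ u) :=
    Submodule.span_le.2 fun d hd => hd.2
  exact hker hfS

end AnnihilatingSpan

section Main

variable {F : Type*} [Field F] [CharZero F] {Γ : Type*} [AddCommGroup Γ] [DecidableEq Γ]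
  {A : Type*} [Ring A] [Algebra F A] {ε : Γ → Γ → F} {𝒜 : Γ → Submodule F A} [GradedAlgebra 𝒜]
  {S : Set (Module.End F A)}

theorem exists_sub_mem_of_notMem_zeroWeightLevel_zero {D : Set (Module.End F A)}
    (hε : IsSkewBicharacter ε)
    (hcomm : ∀ (l m : Γ) (a b : A), a ∈ 𝒜 l → b ∈ 𝒜 m → a * b = ε l m • (b * a))
    (hS : ∀ d ∈ S, ∃ γ, IsHomColorDer ε 𝒜 γ d) (hc : IsColorCommutative ε 𝒜 S)
    (hDS : D ⊆ Submodule.span F S) (hsimple : IsGradedDSimple 𝒜 D) (B : Subalgebra F A)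
    (hB1 : (zeroWeightLevel S 1 : Set A) ⊆ B) {m : ℕ}
    (hBm : ∀ x ν, x ∈ 𝒜 ν → x ∈ zeroWeightLevel S m → x ∈ B) {u : A} {μ : Γ} (hu : u ∈ 𝒜 μ)
    (hum : u ∈ zeroWeightLevel S (m + 1)) (hu0 : u ∉ zeroWeightLevel S 0) :
    ∃ u₁ ∈ 𝒜 μ, u₁ ∈ zeroWeightLevel S (m + 1) ∧
      annihilatingSpan S u < annihilatingSpan S u₁ ∧ u - u₁ ∈ B := by
  obtain ⟨f, hfS, γ, hf, hfu, t, ht, ht1, hft, htu⟩ :=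
    exists_apply_eq_one hε hcomm hS hc hDS hsimple hu hum hu0
  obtain ⟨N, hN, hfN⟩ : ∃ N ≤ m + 1, f (taylorCorrection f t u N) = 0 := by
    by_cases hγ : ε γ γ = 1
    · have hγ' : ε γ (-γ) = 1 := by
        simpa [hγ, hε.apply_zero_right] using (hε.map_add_right γ γ (-γ)).symm
      refine ⟨m + 1, le_rfl, ?_⟩
      rw [hf.map_taylorCorrection ht hft hγ', pow_apply_eq_zero_of_mem_zeroWeightLevel hfS hum,
        mul_zero, smul_zero]
    · exact ⟨1, by omega, hf.map_taylorCorrection_one ht hft (hc.mul_self_eq_zero hfS hf hγ)⟩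
  refine ⟨taylorCorrection f t u N, taylorCorrection_mem fun j _ => ?_,
    taylorCorrection_mem fun j hj => ?_, annihilatingSpan_lt (fun d hd hdu => ?_) hfS hfu hfN,
    sub_taylorCorrection_mem B (hB1 ht1) fun j hj => ?_⟩
  · have hdeg : j • -γ + (j • γ + μ) = μ := by rw [smul_neg]; abel
    simpa only [hdeg] using SetLike.mul_mem_graded (SetLike.pow_mem_graded j ht)
      (hf.pow_apply_mem hu j)
  · have hj' : m + 1 - j + j = m + 1 := by omega
    have := mul_mem_zeroWeightLevel hS (SetLike.pow_mem_graded j ht)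
      (pow_mem_zeroWeightLevel hS hε ht ht1 j)
      (pow_apply_mem_zeroWeightLevel hfS (n := m + 1 - j) (by rwa [hj']))
    rwa [add_comm, hj'] at this
  · refine taylorCorrection_mem (W := LinearMap.ker d) fun j _ => ?_
    obtain ⟨δ, hδ⟩ := hS d hd
    rw [LinearMap.mem_ker, hδ.map_mul (SetLike.pow_mem_graded j ht),
      hδ.map_pow_eq_zero hε ht (htu d hd hdu), hc.apply_pow_apply_eq_zero hS hd hfS hdu,
      zero_mul, mul_zero, smul_zero, add_zero]
  · refine hBm _ _ (hf.pow_apply_mem hu (j + 1)) (zeroWeightLevel_mono (Nat.sub_le m j) ?_)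
    refine pow_apply_mem_zeroWeightLevel hfS ?_
    rwa [show m - j + (j + 1) = m + 1 by omega]

theorem mem_adjoin_of_mem_zeroWeightLevel {D : Submodule F (Module.End F A)}
    [FiniteDimensional F D] (hε : IsSkewBicharacter ε)
    (hcomm : ∀ (l m : Γ) (a b : A), a ∈ 𝒜 l → b ∈ 𝒜 m → a * b = ε l m • (b * a))
    (hS : ∀ d ∈ S, ∃ γ, IsHomColorDer ε 𝒜 γ d) (hc : IsColorCommutative ε 𝒜 S) (hSD : S ⊆ D)
    (hDS : D ≤ Submodule.span F S) (hsimple : IsGradedDSimple 𝒜 (D : Set (Module.End F A)))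
    (m : ℕ) {u : A} {μ : Γ} (hu : u ∈ 𝒜 μ) (hum : u ∈ zeroWeightLevel S m) :
    u ∈ Algebra.adjoin F (zeroWeightLevel S 1 : Set A) := by
  have hB1 : (zeroWeightLevel S 1 : Set A) ⊆ Algebra.adjoin F (zeroWeightLevel S 1 : Set A) :=
    Algebra.subset_adjoin
  induction m generalizing u μ with
  | zero => exact hB1 (zeroWeightLevel_mono zero_le_one hum)
  | succ m ih =>
    induction hk : Module.finrank F D - Module.finrank F (annihilatingSpan S u)
      using Nat.strong_induction_on generalizing u with
    | _ k ihk =>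
    by_cases hu0 : u ∈ zeroWeightLevel S 0
    · exact hB1 (zeroWeightLevel_mono zero_le_one hu0)
    obtain ⟨u₁, hu₁, hu₁m, hlt, hsub⟩ := exists_sub_mem_of_notMem_zeroWeightLevel_zero hε hcomm
      hS hc hDS hsimple _ hB1 (fun _ _ hx hxm => ih hx hxm) hu hum hu0
    have : FiniteDimensional F (annihilatingSpan S u₁) :=
      Submodule.finiteDimensional_of_le (annihilatingSpan_le hSD u₁)
    have hrank := Submodule.finrank_lt_finrank_of_lt hlt
    have hrankD := Submodule.finrank_mono (annihilatingSpan_le hSD u₁)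
    simpa using add_mem hsub (ihk _ (by omega) hu₁ hu₁m rfl)

end Main

theorem zeroWeightSpace_generated_by_first_level_general
    {F : Type*} [Field F] [CharZero F]
    {Γ : Type*} [AddCommGroup Γ] [DecidableEq Γ]
    {A : Type*} [Ring A] [Algebra F A]
    (ε : Γ → Γ → F)
    (hskew : ∀ l m : Γ, ε l m * ε m l = 1)
    (hmul : ∀ l m n : Γ, ε l (m + n) = ε l m * ε l n)
    (𝒜 : Γ → Submodule F A) [GradedAlgebra 𝒜]
    (hcomm : ∀ (l m : Γ) (a b : A), a ∈ 𝒜 l → b ∈ 𝒜 m → a * b = ε l m • (b * a))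
    (D : Submodule F (Module.End F A)) [FiniteDimensional F D]
    (hDgraded : D = Submodule.span F
      {d : Module.End F A | d ∈ D ∧ ∃ γ : Γ, IsHomColorDer ε 𝒜 γ d})
    (hDcomm : ∀ d d' : Module.End F A, d ∈ D → d' ∈ D → ∀ γ γ' : Γ,
      IsHomColorDer ε 𝒜 γ d → IsHomColorDer ε 𝒜 γ' d' →
      d * d' = ε γ γ' • (d' * d))
    (hsimple : IsGradedDSimple 𝒜 (D : Set (Module.End F A))) :
    ∀ (m : ℕ) (u : A),
      u ∈ wtSpace {d : Module.End F A | d ∈ D ∧ ∃ γ : Γ, IsHomColorDer ε 𝒜 γ d}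
            (0 : Module.End F A → F) m →
      u ∈ Algebra.adjoin F
            (wtSpace {d : Module.End F A | d ∈ D ∧ ∃ γ : Γ, IsHomColorDer ε 𝒜 γ d}
              (0 : Module.End F A → F) 1) := by
  classical
  intro m u hu
  have hS : ∀ d ∈ {d : Module.End F A | d ∈ D ∧ ∃ γ : Γ, IsHomColorDer ε 𝒜 γ d},
      ∃ γ, IsHomColorDer ε 𝒜 γ d := fun _ hd => hd.2
  rw [← coe_zeroWeightLevel] at hu ⊢
  rw [← sum_support_decompose 𝒜 u]
  exact sum_mem fun μ _ => mem_adjoin_of_mem_zeroWeightLevel ⟨hskew, hmul⟩ hcomm hS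
    (fun d hd d' hd' => hDcomm d d' hd.1 hd'.1) (fun _ hd => hd.1) hDgraded.le hsimple m
    (SetLike.coe_mem _) (decompose_mem_zeroWeightLevel hS hu μ)

/-- Under the hypotheses of the classification theorem (algebraically
closed `F` of characteristic zero, `D` finite-dimensional, `Γ`-graded,
`ε`-commutative, locally finite, with `Γ`-graded eigenspaces, and `A` graded
`D`-simple), the zero generalized weight space `A(0) = ∪_m A(0)^{(m)}` (taken with
respect to the set of homogeneous elements of `D`) is contained in (hence equal to)
the unital `F`-subalgebra of `A` generated by `A(0)^{(1)}`. -/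
theorem zeroWeightSpace_generated_by_first_level
    {F : Type*} [Field F] [IsAlgClosed F] [CharZero F]
    {Γ : Type*} [AddCommGroup Γ] [DecidableEq Γ]
    {A : Type*} [Ring A] [Algebra F A]
    (ε : Γ → Γ → F)
    (hskew : ∀ l m : Γ, ε l m * ε m l = 1)
    (hmul : ∀ l m n : Γ, ε l (m + n) = ε l m * ε l n)
    (𝒜 : Γ → Submodule F A) [GradedAlgebra 𝒜]
    (hcomm : ∀ (l m : Γ) (a b : A), a ∈ 𝒜 l → b ∈ 𝒜 m → a * b = ε l m • (b * a))
    (D : Submodule F (Module.End F A)) [FiniteDimensional F D]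
    (hDgraded : D = Submodule.span F
      {d : Module.End F A | d ∈ D ∧ ∃ γ : Γ, IsHomColorDer ε 𝒜 γ d})
    (hDcomm : ∀ d d' : Module.End F A, d ∈ D → d' ∈ D → ∀ γ γ' : Γ,
      IsHomColorDer ε 𝒜 γ d → IsHomColorDer ε 𝒜 γ' d' →
      d * d' = ε γ γ' • (d' * d))
    (hDlf : ∀ d ∈ D, ∀ v : A, FiniteDimensional F
      (Submodule.span F (Set.range fun n : ℕ => (d ^ n) v)))
    (hDeig : ∀ d : Module.End F A, d ∈ D → (∃ γ : Γ, IsHomColorDer ε 𝒜 γ d) →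
      ∀ (c : F) (v : A), d v = c • v → ∀ γ' : Γ,
        d (DirectSum.decompose 𝒜 v γ' : A) = c • (DirectSum.decompose 𝒜 v γ' : A))
    (hsimple : IsGradedDSimple 𝒜 (D : Set (Module.End F A))) :
    ∀ (m : ℕ) (u : A),
      u ∈ wtSpace {d : Module.End F A | d ∈ D ∧ ∃ γ : Γ, IsHomColorDer ε 𝒜 γ d}
            (0 : Module.End F A → F) m →
      u ∈ Algebra.adjoin F
            (wtSpace {d : Module.End F A | d ∈ D ∧ ∃ γ : Γ, IsHomColorDer ε 𝒜 γ d}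
              (0 : Module.End F A → F) 1) :=
  zeroWeightSpace_generated_by_first_level_general ε hskew hmul 𝒜 hcomm D hDgraded hDcomm hsimple
end
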